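/- arXiv:2506.14694 — 3 statements merged into one kernel-verified Lean document; each statement's English description precedes it below -/
import Mathlib

section
/- Let M be a real m×m matrix with rows and columns indexed by a finite set H, satisfying M·M = M (an idempotent/projection matrix), and let r be the rank of M. Then for every 0 ≤ k ≤ r, Σ_{A ⊆ H, |A| = k} det(M[A]) = C(r,k). -/
open Matrix

/-- The principal submatrix `M[A]` of `M` determined by the rows and columns
    with index in `A` (with the convention `det M[∅] = 1`). -/
def psub {ι : Type*} (M : Matrix ι ι ℝ) (A : Finset ι) : Matrix ↥A ↥A ℝ :=
  M.submatrix (fun a => a.1) (fun a => a.1)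

/-!
The sum of the `k × k` principal minors of `M` is the coefficient of `X ^ k` in
`det (1 + X • M)`. An idempotent `M` is, in a basis adapted to `range M ⊕ ker M`, the block
matrix `diag(1, 0)` with an `r × r` identity block, so `det (1 + t • M) = (1 + t) ^ r`, and the
coefficient of `X ^ k` in `(1 + X) ^ r` is `C(r, k)`.
-/

open Module LinearMap in
theorem LinearMap.IsProj.det_id_add_smul {R E : Type*} [CommRing R] [AddCommGroup E]
    [Module R E] {p : Submodule R E} {f : E →ₗ[R] E} (h : IsProj p f)
    [Module.Free R p] [Module.Finite R p] [Module.Free R (ker f)] [Module.Finite R (ker f)]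
    (t : R) : (id + t • f).det = (1 + t) ^ finrank R p := by
  set e := p.prodEquivOfIsCompl (ker f) h.isCompl
  have hconj : id + t • f = e.conj (prodMap ((1 + t) • id) id) := calc
    id + t • f = e.conj id + t • e.conj (prodMap id 0) := by
      rw [LinearEquiv.conj_id, ← h.eq_conj_prodMap]
    _ = e.conj (prodMap ((1 + t) • id) id) := by
      rw [← map_smul, ← map_add]
      congr 1
      ext <;> simp [add_smul]
  rw [hconj, LinearEquiv.conj_apply, comp_assoc, det_conj, det_prodMap, det_smul, det_id, det_id,
    mul_one, mul_one]

namespace Matrix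

variable {K n : Type*} [Field K] [Fintype n] [DecidableEq n] {M : Matrix n n K}

theorem det_one_add_smul_of_isIdempotentElem (hM : IsIdempotentElem M) (t : K) :
    det (1 + t • M) = (1 + t) ^ M.rank := by
  rw [← LinearMap.det_toLin', map_add, map_smul, toLin'_one]
  exact LinearMap.IsIdempotentElem.isProj_range _ (hM.map toLinAlgEquiv') |>.det_id_add_smul t

open Polynomial in
theorem det_one_add_X_smul_of_isIdempotentElem [Infinite K] (hM : IsIdempotentElem M) :
    det (1 + (X : K[X]) • M.map C) = (1 + X) ^ M.rank :=
  Polynomial.funext fun t => by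
    have heval : (1 + (X : K[X]) • M.map C).map (eval t) = 1 + t • M := by
      ext i j
      simp [one_apply, apply_ite, mul_comm t]
    rw [← coe_evalRingHom, RingHom.map_det, RingHom.mapMatrix_apply, coe_evalRingHom, heval]
    simpa using det_one_add_smul_of_isIdempotentElem hM t

end Matrix

theorem sum_principal_minors_of_projection_general
    {H : Type*} [Fintype H] [DecidableEq H]
    (M : Matrix H H ℝ) (hM : M * M = M) (k : ℕ) :
    ∑ A ∈ (Finset.univ : Finset H).powersetCard k, (psub M A).det
      = (M.rank.choose k : ℝ) := by
  have hcoeff := M.coeff_det_one_add_X_smul_eq_sum_minors k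
  rw [det_one_add_X_smul_of_isIdempotentElem hM, add_comm, Polynomial.coeff_X_add_one_pow]
    at hcoeff
  exact hcoeff.symm

/-- Let `M` be a real idempotent (projection) matrix with rows and columns
indexed by a finite set `H`, and let `r` be its rank. Then for every `0 ≤ k ≤ r`,
`∑_{A ⊆ H, |A| = k} det(M[A]) = C(r,k)`. -/
theorem sum_principal_minors_of_projection
    {H : Type*} [Fintype H] [DecidableEq H]
    (M : Matrix H H ℝ) (hM : M * M = M) (k : ℕ) (hk : k ≤ M.rank) :
    ∑ A ∈ (Finset.univ : Finset H).powersetCard k, (psub M A).det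
      = (M.rank.choose k : ℝ) :=
  sum_principal_minors_of_projection_general M hM k
end

section
/- Let P be a real symmetric matrix with rows and columns indexed by a finite set H of size m, satisfying P·P = P, and let r ≥ 1 be the rank of P. Then for every 1 ≤ k ≤ r, Σ_{A ⊆ H, |A| = r, det P[A] > 0} det(P[A]) · σ_k(λ_{A,1}^{−1}, λ_{A,2}^{−1}, …, λ_{A,r}^{−1}) ≤ C(m−r+k, k)·C(r, k) ≤ (e²·m·r/k²)^k. (The left-hand side is the expectation E σ_k(λ_{X,1}^{−1},…,λ_{X,r}^{−1}) for the determinantal process X corresponding to P.) -/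
open Matrix

/-- The multiset of eigenvalues (with multiplicity) of a real symmetric matrix
    (junk value `0` if the matrix is not symmetric). -/
noncomputable def eigs {ι : Type*} [Fintype ι] [DecidableEq ι] (M : Matrix ι ι ℝ) :
    Multiset ℝ :=
  if h : M.IsHermitian then Finset.univ.val.map h.eigenvalues else 0

/-- `σ_k(λ_1⁻¹, …, λ_m⁻¹)`: the elementary symmetric polynomial of degree `k` evaluated at
    the inverses of the eigenvalues of `M`. -/
noncomputable def invEsymm {ι : Type*} [Fintype ι] [DecidableEq ι] (M : Matrix ι ι ℝ)
    (k : ℕ) : ℝ :=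
  ((((eigs M).map (fun x => x⁻¹)).powersetCard k).map Multiset.prod).sum

/-!
For an `r`-set `A` with `det P[A] > 0`, `det P[A] = ∏ λ_{A,i}`, so
`det P[A] · σ_k(λ_A⁻¹) = σ_{r-k}(λ_A)`, which is the sum of the principal minors `det P[B]` over
`B ⊆ A` with `|B| = r - k`. These minors are nonnegative because `P = Pᵀ P` is positive
semidefinite, so the condition `det P[A] > 0` can be dropped. Exchanging the sums, each `B` lies in
`C(m-r+k, k)` sets `A`, and `∑_{|B| = r-k} det P[B] = σ_{r-k}(λ_P) = C(r, k)` because the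
eigenvalues of `P` are `r` ones and `m - r` zeros. The second inequality is
`C(n, k) ≤ n^k / k! ≤ (e n / k)^k`, from `k^k / k! ≤ e^k`.
-/

open Finset

namespace Finset

theorem prod_mul_sum_powersetCard_prod_inv {ι K : Type*} [DecidableEq ι] [Field K]
    (s : Finset ι) {f : ι → K} (hf : ∀ i ∈ s, f i ≠ 0) {k : ℕ} (hk : k ≤ #s) :
    (∏ i ∈ s, f i) * ∑ t ∈ s.powersetCard k, ∏ i ∈ t, (f i)⁻¹ =
      ∑ t ∈ s.powersetCard (#s - k), ∏ i ∈ t, f i := by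
  rw [mul_sum]
  refine sum_nbij' (s \ ·) (s \ ·) ?_ ?_ ?_ ?_ ?_
  · intro t ht
    rw [mem_powersetCard] at ht ⊢
    exact ⟨sdiff_subset, by rw [card_sdiff_of_subset ht.1, ht.2]⟩
  · intro t ht
    rw [mem_powersetCard] at ht ⊢
    exact ⟨sdiff_subset, by rw [card_sdiff_of_subset ht.1, ht.2]; omega⟩
  · exact fun t ht => sdiff_sdiff_eq_self (mem_powersetCard.1 ht).1
  · exact fun t ht => sdiff_sdiff_eq_self (mem_powersetCard.1 ht).1
  · intro t ht
    have hts := (mem_powersetCard.1 ht).1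
    rw [← prod_sdiff hts, prod_inv_distrib, mul_assoc,
      mul_inv_cancel₀ (prod_ne_zero_iff.2 fun i hi => hf i (hts hi)), mul_one]

variable {α : Type*} [Fintype α] [DecidableEq α]

theorem card_filter_powersetCard_superset (B : Finset α) {r : ℕ} (hr : #B ≤ r) :
    #{A ∈ univ.powersetCard r | B ⊆ A} = (Fintype.card α - #B).choose (r - #B) := by
  rw [← card_compl, ← card_powersetCard]
  refine card_nbij' (· \ B) (· ∪ B) ?_ ?_ ?_ ?_
  · intro A hA
    simp only [coe_filter, mem_powersetCard, subset_univ, true_and] at hA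
    simp only [mem_coe, mem_powersetCard]
    exact ⟨fun x hx => mem_compl.2 (mem_sdiff.1 hx).2, by rw [card_sdiff_of_subset hA.2, hA.1]⟩
  · intro C hC
    simp only [mem_coe, mem_powersetCard, subset_compl_iff_disjoint_right] at hC
    simp only [coe_filter, mem_powersetCard, subset_univ, true_and]
    exact ⟨by rw [card_union_of_disjoint hC.1, hC.2]; omega, subset_union_right⟩
  · intro A hA
    exact sdiff_union_of_subset (mem_filter.1 hA).2
  · intro C hC
    simp only [mem_coe, mem_powersetCard, subset_compl_iff_disjoint_right] at hC
    exact union_sdiff_cancel_right hC.1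

theorem sum_powersetCard_sum_powersetCard {β : Type*} [AddCommMonoid β] (f : Finset α → β)
    {j r : ℕ} (hjr : j ≤ r) :
    ∑ A ∈ univ.powersetCard r, ∑ B ∈ A.powersetCard j, f B =
      (Fintype.card α - j).choose (r - j) • ∑ B ∈ univ.powersetCard j, f B := by
  rw [sum_comm' (t' := univ.powersetCard j) (s' := fun B => {A ∈ univ.powersetCard r | B ⊆ A}),
    smul_sum]
  · refine sum_congr rfl fun B hB => ?_
    rw [sum_const, card_filter_powersetCard_superset B ((mem_powersetCard.1 hB).2 ▸ hjr),
      (mem_powersetCard.1 hB).2]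
  · intro A B
    simp only [mem_powersetCard, mem_filter, subset_univ, true_and]
    grind

end Finset

theorem Nat.choose_le_exp_one_mul_div_pow (n k : ℕ) :
    (n.choose k : ℝ) ≤ (Real.exp 1 * n / k) ^ k := by
  have hkk : (0 : ℝ) < (k : ℝ) ^ k := by exact_mod_cast Nat.pow_self_pos
  have hfact : (0 : ℝ) < k.factorial := by exact_mod_cast k.factorial_pos
  have hk_fact : (k : ℝ) ^ k ≤ Real.exp 1 ^ k * k.factorial := by
    rw [Real.exp_one_pow, ← div_le_iff₀ hfact]
    exact Real.pow_div_factorial_le_exp _ k.cast_nonneg k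
  calc (n.choose k : ℝ) ≤ (n : ℝ) ^ k / k.factorial := Nat.choose_le_pow_div k n
    _ ≤ (Real.exp 1 * n / k) ^ k := by
      rw [div_pow, mul_pow, div_le_div_iff₀ hfact hkk]
      calc (n : ℝ) ^ k * k ^ k ≤ n ^ k * (Real.exp 1 ^ k * k.factorial) := by gcongr
        _ = _ := by ring

theorem choose_sub_add_mul_choose_le_exp_one {m r k : ℕ} (hk : k ≤ r) (hrm : r ≤ m) :
    ((m - r + k).choose k * r.choose k : ℝ) ≤ (Real.exp 1 ^ 2 * m * r / (k : ℝ) ^ 2) ^ k :=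
  calc ((m - r + k).choose k * r.choose k : ℝ)
      ≤ (Real.exp 1 * (m - r + k : ℕ) / k) ^ k * (Real.exp 1 * r / k) ^ k := by
        gcongr <;> exact Nat.choose_le_exp_one_mul_div_pow _ _
    _ ≤ (Real.exp 1 * m / k) ^ k * (Real.exp 1 * r / k) ^ k := by
        gcongr
        exact_mod_cast (by omega : m - r + k ≤ m)
    _ = (Real.exp 1 ^ 2 * m * r / (k : ℝ) ^ 2) ^ k := by
        rw [← mul_pow]
        ring

theorem sum_powersetCard_det_psub_psub {ι : Type*} [DecidableEq ι] (M : Matrix ι ι ℝ)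
    (A : Finset ι) (j : ℕ) :
    ∑ u ∈ (univ : Finset A).powersetCard j, (psub (psub M A) u).det =
      ∑ B ∈ A.powersetCard j, (psub M B).det := by
  conv_rhs => rw [← A.attach_map_val, powersetCard_map, sum_map]
  exact sum_congr rfl fun u _ =>
    det_submatrix_equiv_self (u.equivMap (Function.Embedding.subtype _)) (psub M _)

namespace Matrix.IsHermitian

variable {n : Type*} [Fintype n] [DecidableEq n] {M : Matrix n n ℝ}

theorem eigs_eq (hM : M.IsHermitian) : eigs M = univ.val.map hM.eigenvalues := dif_pos hM

open Polynomial in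
theorem sum_powersetCard_det_psub (hM : M.IsHermitian) {j : ℕ} (hj : j ≤ Fintype.card n) :
    ∑ s ∈ univ.powersetCard j, (psub M s).det = (eigs M).esymm j := by
  have hcharpoly : M.charpoly = ((eigs M).map fun t => X - C t).prod := by
    rw [hM.charpoly_eq, hM.eigs_eq, Multiset.map_map, prod_eq_multiset_prod]
    rfl
  have hcard : (eigs M).card = Fintype.card n := by simp [hM.eigs_eq]
  have h := M.charpoly_coeff_eq_sum_minors j hj
  rw [hcharpoly, Multiset.prod_X_sub_C_coeff _ (hcard ▸ Nat.sub_le _ _), hcard,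
    Nat.sub_sub_self hj] at h
  exact (mul_left_cancel₀ (pow_ne_zero _ (neg_ne_zero.2 one_ne_zero)) h).symm

theorem det_mul_invEsymm (hM : M.IsHermitian) (hdet : M.det ≠ 0) {k : ℕ}
    (hk : k ≤ Fintype.card n) :
    M.det * invEsymm M k = (eigs M).esymm (Fintype.card n - k) := by
  have hdet_eq : M.det = ∏ i, hM.eigenvalues i := by simpa using hM.det_eq_prod_eigenvalues
  change M.det * ((eigs M).map (·⁻¹)).esymm k = _
  rw [hM.eigs_eq, Multiset.map_map, esymm_map_val, esymm_map_val, hdet_eq, ← card_univ]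
  rw [hdet_eq] at hdet
  exact prod_mul_sum_powersetCard_prod_inv univ
    (fun i _ => prod_ne_zero_iff.1 hdet i (mem_univ i)) hk

theorem esymm_eigs_of_isIdempotentElem (hM : M.IsHermitian) (hMM : IsIdempotentElem M) (j : ℕ) :
    (eigs M).esymm j = M.rank.choose j := by
  set S : Finset n := {i | hM.eigenvalues i ≠ 0}
  have hS : ∀ i, hM.eigenvalues i = if i ∈ S then 1 else 0 := by
    intro i
    rcases hMM.spectrum_subset ℝ (hM.eigenvalues_mem_spectrum_real i) with h | h <;>
      simp_all [S]
  rw [hM.eigs_eq, esymm_map_val]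
  simp_rw [hS, prod_boole, ← subset_iff]
  rw [sum_boole, hM.rank_eq_card_non_zero_eigs, Fintype.card_subtype, ← card_powersetCard]
  congr 2
  ext t
  simp only [mem_filter, mem_powersetCard, subset_univ, true_and]
  exact and_comm

end Matrix.IsHermitian

theorem Matrix.IsHermitian.det_psub_mul_invEsymm {ι : Type*} [DecidableEq ι] {P : Matrix ι ι ℝ}
    (hP : P.IsHermitian) {A : Finset ι} (hA : (psub P A).det ≠ 0) {k : ℕ} (hk : k ≤ #A) :
    (psub P A).det * invEsymm (psub P A) k = ∑ B ∈ A.powersetCard (#A - k), (psub P B).det := by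
  have hPA : (psub P A).IsHermitian := hP.submatrix _
  rw [hPA.det_mul_invEsymm hA (by simpa), ← hPA.sum_powersetCard_det_psub (by simp),
    Fintype.card_coe, sum_powersetCard_det_psub_psub]

theorem expected_esymm_inv_eigenvalues_le_general
    {H : Type*} [Fintype H] [DecidableEq H]
    (P : Matrix H H ℝ) (hP : P.IsHermitian) (hPP : P * P = P)
    (k : ℕ) (hk : k ≤ P.rank) :
    (∑ A ∈ ((Finset.univ : Finset H).powersetCard P.rank).filter
        (fun A => 0 < (psub P A).det),
        (psub P A).det * invEsymm (psub P A) k)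
      ≤ ((Fintype.card H - P.rank + k).choose k * P.rank.choose k : ℝ) ∧
    ((Fintype.card H - P.rank + k).choose k * P.rank.choose k : ℝ)
      ≤ (Real.exp 1 ^ 2 * Fintype.card H * P.rank / (k : ℝ)^2)^k := by
  have hrm : P.rank ≤ Fintype.card H := P.rank_le_card_width
  have hPSD : P.PosSemidef := by
    simpa only [hP.eq, hPP] using P.posSemidef_conjTranspose_mul_self
  refine ⟨?_, choose_sub_add_mul_choose_le_exp_one hk hrm⟩
  calc _ = ∑ A ∈ (univ.powersetCard P.rank).filter (fun A => 0 < (psub P A).det),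
          ∑ B ∈ A.powersetCard (P.rank - k), (psub P B).det := by
        refine sum_congr rfl fun A hA => ?_
        obtain ⟨hAr, hApos⟩ := mem_filter.1 hA
        rw [← (mem_powersetCard.1 hAr).2] at hk ⊢
        exact hP.det_psub_mul_invEsymm hApos.ne' hk
    _ ≤ ∑ A ∈ univ.powersetCard P.rank, ∑ B ∈ A.powersetCard (P.rank - k), (psub P B).det :=
        sum_le_sum_of_subset_of_nonneg (filter_subset _ _) fun A _ _ =>
          sum_nonneg fun B _ => (hPSD.submatrix _).det_nonneg
    _ = _ := by
        rw [sum_powersetCard_sum_powersetCard _ (Nat.sub_le _ _),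
          hP.sum_powersetCard_det_psub (by omega), hP.esymm_eigs_of_isIdempotentElem hPP,
          Nat.choose_symm hk, Nat.sub_sub_self hk, nsmul_eq_mul,
          show Fintype.card H - (P.rank - k) = Fintype.card H - P.rank + k by omega]

/-- Let `P` be a real symmetric projection matrix with rows and columns
indexed by a finite set `H` of size `m` and of rank `r ≥ 1`. Then for every `1 ≤ k ≤ r`,
`E σ_k(λ_{X,1}⁻¹, …, λ_{X,r}⁻¹) = ∑_{A ⊆ H, |A| = r, det P[A] > 0} det(P[A])·σ_k(λ_{A,·}⁻¹)
 ≤ C(m-r+k, k)·C(r, k) ≤ (e²·m·r/k²)^k`. -/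
theorem expected_esymm_inv_eigenvalues_le
    {H : Type*} [Fintype H] [DecidableEq H]
    (P : Matrix H H ℝ) (hP : P.IsHermitian) (hPP : P * P = P) (hr : 1 ≤ P.rank)
    (k : ℕ) (hk1 : 1 ≤ k) (hk : k ≤ P.rank) :
    (∑ A ∈ ((Finset.univ : Finset H).powersetCard P.rank).filter
        (fun A => 0 < (psub P A).det),
        (psub P A).det * invEsymm (psub P A) k)
      ≤ ((Fintype.card H - P.rank + k).choose k * P.rank.choose k : ℝ) ∧
    ((Fintype.card H - P.rank + k).choose k * P.rank.choose k : ℝ)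
      ≤ (Real.exp 1 ^ 2 * Fintype.card H * P.rank / (k : ℝ)^2)^k :=
  expected_esymm_inv_eigenvalues_le_general P hP hPP k hk
end

section
/- Fix d ≥ 2 and let 0 < c < sqrt((d+1)/e). Then lim_{n→∞} Σ_A |H_{d−1}(S_A,ℤ)|² / n^{C(n−2,d)} = 0, where for each n the sum ranges over all sets A of (d+1)-element subsets of [n] such that S_A is a d-dimensional hypertree and |H_{d−1}(S_A,ℤ)| ≤ c^{C(n,d)}. (Probabilistically: ℙ(|H_{d−1}(T_n,ℤ)| ≤ c^{C(n,d)}) → 0 for the determinantal hypertree T_n, whose law assigns to each d-dimensional hypertree S on [n] probability |H_{d−1}(S,ℤ)|²/n^{C(n−2,d)}.) -/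
open Matrix

/-- The set of `k`-element subsets of `[n] = {1,…,n}` (modeled as `Fin n`),
    i.e. the possible `(k-1)`-dimensional faces of the simplex on `[n]`. -/
abbrev Face (n k : ℕ) := {σ : Finset (Fin n) // σ.card = k}

/-- The boundary matrix of the simplex on `[n]`: rows indexed by `j`-element subsets,
    columns by `k`-element subsets; the `(σ,τ)`-entry is `(-1)^i` if `σ = τ \ {v}`
    where `v` is the `(i+1)`-st smallest element of `τ`, and `0` if `σ ⊄ τ`. -/
def bdry (n j k : ℕ) : Matrix (Face n j) (Face n k) ℤ :=
  Matrix.of fun σ τ =>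
    ∑ v ∈ τ.1, if σ.1 = τ.1.erase v then (-1 : ℤ) ^ ((τ.1.filter (fun x => x < v)).card) else 0

/-- The boundary matrix viewed as a real matrix. -/
def bdryR (n j k : ℕ) : Matrix (Face n j) (Face n k) ℝ := (bdry n j k).map Int.cast

/-- `P_n = (1/n) ∂_{n,d}ᵀ ∂_{n,d}`. -/
noncomputable def Pmat (n d : ℕ) : Matrix (Face n (d+1)) (Face n (d+1)) ℝ :=
  ((n : ℝ))⁻¹ • ((bdryR n d (d+1))ᵀ * bdryR n d (d+1))

/-- `∂_{A,d}`: the submatrix of `∂_{n,d}` consisting of the columns indexed by `A`. -/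
def bdrySub (n d : ℕ) (A : Finset (Face n (d+1))) : Matrix (Face n d) ↥A ℤ :=
  (bdry n d (d+1)).submatrix id (fun a => a.1)

/-- `H_{d-1}(S_A, ℤ) = ker ∂_{n,d-1} / im ∂_{A,d}`. -/
def homologyZ (n d : ℕ) (A : Finset (Face n (d+1))) : Type :=
  ↥(LinearMap.ker (Matrix.mulVecLin (bdry n (d-1) d))) ⧸
    Submodule.comap (LinearMap.ker (Matrix.mulVecLin (bdry n (d-1) d))).subtype
      (LinearMap.range (Matrix.mulVecLin (bdrySub n d A)))

/-- `S_A` is a `d`-dimensional hypertree on `[n]`. -/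
def IsHypertree (n d : ℕ) (A : Finset (Face n (d+1))) : Prop :=
  A.card = (n-1).choose d ∧ Finite (homologyZ n d A)

/-- The eigenvalues of a real symmetric matrix sorted in increasing order,
    as a list: `(sortedEigs M).getD (i-1) 0` is `λ_i` for `1 ≤ i ≤ m`. -/
noncomputable def sortedEigs {ι : Type*} [Fintype ι] [DecidableEq ι] (M : Matrix ι ι ℝ) : List ℝ :=
  (eigs M).sort (· ≤ ·)


lemma aux_pow_le_factorial_exp (k : ℕ) : (k : ℝ) ^ k ≤ k.factorial * Real.exp k := by
  induction k with
  | zero => simp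
  | succ k ih =>
    have hstep : ((k : ℝ) + 1) ^ k ≤ (k : ℝ) ^ k * Real.exp 1 := by
      rcases Nat.eq_zero_or_pos k with rfl | hk
      · simpa using Real.one_le_exp zero_le_one
      · have hkpos : (0 : ℝ) < k := by exact_mod_cast hk
        have h2 : (1 + 1 / (k : ℝ)) ^ k ≤ Real.exp 1 := by
          calc (1 + 1 / (k : ℝ)) ^ k ≤ (Real.exp (1 / k)) ^ k := by
                apply pow_le_pow_left₀ (by positivity)
                linarith [Real.add_one_le_exp (1 / (k : ℝ))]
            _ = Real.exp (k * (1 / k)) := by rw [Real.exp_nat_mul]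
            _ = Real.exp 1 := by rw [mul_one_div, div_self hkpos.ne']
        calc ((k : ℝ) + 1) ^ k = ((k : ℝ) * (1 + 1 / k)) ^ k := by
              rw [mul_add, mul_one, mul_one_div, div_self hkpos.ne']
          _ = (k : ℝ) ^ k * (1 + 1 / k) ^ k := mul_pow _ _ _
          _ ≤ (k : ℝ) ^ k * Real.exp 1 := by
              exact mul_le_mul_of_nonneg_left h2 (by positivity)
    have hexp : Real.exp 1 > 0 := Real.exp_pos 1
    have hf : (0:ℝ) ≤ (k.factorial : ℝ) := by positivity
    calc ((k + 1 : ℕ) : ℝ) ^ (k + 1) = ((k : ℝ) + 1) ^ k * ((k : ℝ) + 1) := by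
          push_cast; ring
      _ ≤ ((k : ℝ) ^ k * Real.exp 1) * ((k : ℝ) + 1) := by
          apply mul_le_mul_of_nonneg_right hstep (by positivity)
      _ ≤ ((k.factorial * Real.exp k) * Real.exp 1) * ((k : ℝ) + 1) := by
          apply mul_le_mul_of_nonneg_right (mul_le_mul_of_nonneg_right ih hexp.le) (by positivity)
      _ = ((k + 1 : ℕ).factorial : ℝ) * Real.exp ((k + 1 : ℕ) : ℝ) := by
          rw [Nat.factorial_succ]
          push_cast [Real.exp_add]
          ring

lemma aux_le_choose (a b : ℕ) : a + 1 ≤ (a + b + 1).choose (b + 1) := by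
  induction a with
  | zero => simp
  | succ a ih =>
    have h : a + 1 + b + 1 = (a + b + 1) + 1 := by omega
    rw [h, Nat.choose_succ_succ]
    have := Nat.choose_pos (show b ≤ a + b + 1 by omega)
    have hs : (a + b + 1).choose (Nat.succ b) = (a + b + 1).choose (b + 1) := rfl
    omega

open scoped Classical in
/-- For `0 < c < sqrt((d+1)/e)`, the probability that the determinantal
hypertree `T_n` satisfies `|H_{d-1}(T_n,ℤ)| ≤ c^C(n,d)` tends to `0`; the probability is the
sum of `|H_{d-1}(S_A,ℤ)|² / n^C(n-2,d)` over all hypertrees `S_A` on `[n]` with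
`|H_{d-1}(S_A,ℤ)| ≤ c^C(n,d)`. -/
theorem prob_small_homology_tendsto_zero (d : ℕ) (hd : 2 ≤ d)
    (c : ℝ) (hc0 : 0 < c) (hc : c < Real.sqrt ((d+1) / Real.exp 1)) :
    Filter.Tendsto (fun n : ℕ =>
      ∑ A ∈ Finset.univ.filter (fun A : Finset (Face n (d+1)) =>
          IsHypertree n d A ∧ (Nat.card (homologyZ n d A) : ℝ) ≤ c^(n.choose d)),
        (Nat.card (homologyZ n d A) : ℝ)^2 / (n : ℝ)^((n-2).choose d))
      Filter.atTop (nhds 0) := by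

  classical
  obtain ⟨D, rfl⟩ : ∃ D, d = D + 2 := ⟨d - 2, by omega⟩
  have he1 : (0:ℝ) < Real.exp 1 := Real.exp_pos 1
  have he1' : (1:ℝ) ≤ Real.exp 1 := by nlinarith [Real.add_one_le_exp 1]
  have hdr : (0:ℝ) < (D:ℝ) + 3 := by positivity
  have hc2 : c ^ 2 < ((D:ℝ) + 3) / Real.exp 1 := by
    have h := (Real.lt_sqrt hc0.le).mp hc
    have hcast : ((D + 2 : ℕ) : ℝ) + 1 = (D:ℝ) + 3 := by push_cast; ring
    rwa [hcast] at h
  set b : ℝ := Real.exp 1 * c ^ 2 / ((D:ℝ) + 3) with hbdef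
  have hb0 : 0 < b := by positivity
  have hb1 : b < 1 := by
    rw [hbdef, div_lt_one hdr]
    calc Real.exp 1 * c ^ 2 < Real.exp 1 * (((D:ℝ)+3)/Real.exp 1) :=
          mul_lt_mul_of_pos_left hc2 he1
      _ = (D:ℝ) + 3 := by field_simp
  have hhalf : Filter.Tendsto (fun n : ℕ => (1/2 : ℝ) ^ (n - (D+2))) Filter.atTop (nhds 0) :=
    (tendsto_pow_atTop_nhds_zero_of_lt_one (by norm_num) (by norm_num)).comp
      (Filter.tendsto_sub_atTop_nat (D+2))
  refine tendsto_of_tendsto_of_tendsto_of_le_of_le' tendsto_const_nhds hhalf ?_ ?_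
  · filter_upwards with n
    apply Finset.sum_nonneg
    intro A _
    positivity
  · have hT := (summable_pow_mul_geometric_of_norm_lt_one (R := ℝ) (2*(D+2)) (r := b)
      (by rw [Real.norm_eq_abs, abs_of_pos hb0]; exact hb1)).tendsto_atTop_zero
    have E2 : ∀ᶠ n : ℕ in Filter.atTop,
        (n:ℝ)^(2*(D+2)) * b ^ n < (1/2 : ℝ)^(D+2) * b^(D+2) :=
      hT.eventually (gt_mem_nhds (by positivity))
    filter_upwards [E2, Filter.eventually_ge_atTop (D+5)] with n hE hn
    obtain ⟨m, rfl⟩ : ∃ m, n = m + (D+5) := ⟨n - (D+5), by omega⟩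
    rw [show m + (D+5) - (D+2) = m + 3 by omega, show m + (D+5) - 2 = m + D + 3 by omega]
    set nr : ℝ := ((m + (D+5) : ℕ) : ℝ) with hnrdef
    have hnr0 : (0:ℝ) < nr := by rw [hnrdef]; positivity
    have hnr1 : (1:ℝ) ≤ nr := by rw [hnrdef]; exact_mod_cast Nat.one_le_iff_ne_zero.mpr (by omega)
    have hnrD : ((D:ℝ)+3) ≤ nr := by
      rw [hnrdef]; push_cast
      have : (0:ℝ) ≤ (m:ℝ) := by positivity
      linarith
    -- natural number facts
    have hKpos : 0 < (m+D+4).choose (D+2) := Nat.choose_pos (by omega)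
    have pasc1 : (m+(D+5)).choose (D+2) = (m+D+4).choose (D+1) + (m+D+4).choose (D+2) := by
      simpa [show (m+D+4)+1 = m+(D+5) by omega, show (D+1)+1 = D+2 by omega]
        using Nat.choose_succ_succ (m+D+4) (D+1)
    have pasc2 : (m+D+4).choose (D+2) = (m+D+3).choose (D+1) + (m+D+3).choose (D+2) := by
      simpa [show (m+D+3)+1 = m+D+4 by omega, show (D+1)+1 = D+2 by omega]
        using Nat.choose_succ_succ (m+D+3) (D+1)
    have hKd : (m+D+4).choose (D+2) * (D+2) = (m+D+4).choose (D+1) * (m+3) := by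
      simpa [show (D+1)+1 = D+2 by omega, show m+D+4-(D+1) = m+3 by omega]
        using Nat.choose_succ_right_eq (m+D+4) (D+1)
    have hFK : (m+(D+5)) * (m+D+4).choose (D+2) = (m+(D+5)).choose (D+3) * (D+3) := by
      simpa [show (m+D+4)+1 = m+(D+5) by omega, show (D+2)+1 = D+3 by omega]
        using Nat.add_one_mul_choose_eq (m+D+4) (D+2)
    have hJge : m + 3 ≤ (m+D+4).choose (D+1) := by
      have h := aux_le_choose (m+3) D
      have h' : m+3+D+1 = m+D+4 := by omega
      rw [h'] at h
      omega
    have hIJ : (m+D+3).choose (D+1) ≤ (m+D+4).choose (D+1) := Nat.choose_le_choose _ (by omega)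
    -- abbreviations
    set K := (m+D+4).choose (D+2) with hKdef
    set M := (m+(D+5)).choose (D+2) with hMdef
    set L := (m+D+3).choose (D+2) with hLdef
    set J := (m+D+4).choose (D+1) with hJdef
    set I := (m+D+3).choose (D+1) with hIdef
    -- cardinality bound
    have hcard : ((Finset.univ.filter (fun A : Finset (Face (m+(D+5)) (D+2+1)) =>
        IsHypertree (m+(D+5)) (D+2) A ∧
          (Nat.card (homologyZ (m+(D+5)) (D+2) A) : ℝ) ≤ c ^ M)).card : ℕ)
        ≤ ((m+(D+5)).choose (D+3)).choose K := by
      have hFaceCard : Fintype.card (Face (m+(D+5)) (D+2+1)) = (m+(D+5)).choose (D+3) := by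
        rw [Fintype.card_finset_len, Fintype.card_fin]
      have hsub : (Finset.univ.filter (fun A : Finset (Face (m+(D+5)) (D+2+1)) =>
          IsHypertree (m+(D+5)) (D+2) A ∧
            (Nat.card (homologyZ (m+(D+5)) (D+2) A) : ℝ) ≤ c ^ M)) ⊆
          Finset.powersetCard K (Finset.univ : Finset (Face (m+(D+5)) (D+2+1))) := by
        intro A hA
        rw [Finset.mem_powersetCard]
        refine ⟨Finset.subset_univ A, ?_⟩
        have hcardA := ((Finset.mem_filter.mp hA).2.1).1
        rw [show m+(D+5)-1 = m+D+4 by omega] at hcardA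
        exact hcardA
      have h1 := Finset.card_le_card hsub
      rwa [Finset.card_powersetCard, Finset.card_univ, hFaceCard] at h1
    -- choose bound
    have hfacpos : (0:ℝ) < (K.factorial : ℝ) := by positivity
    have hFr : (((m+(D+5)).choose (D+3) : ℕ) : ℝ) = nr/((D:ℝ)+3) * K := by
      have h := congrArg (Nat.cast : ℕ → ℝ) hFK
      push_cast at h
      rw [hnrdef]
      push_cast
      field_simp
      linarith
    have hchoose : ((((m+(D+5)).choose (D+3)).choose K : ℕ) : ℝ)
        ≤ (nr/((D:ℝ)+3))^K * Real.exp 1 ^ K := by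
      calc ((((m+(D+5)).choose (D+3)).choose K : ℕ) : ℝ)
          ≤ (((m+(D+5)).choose (D+3) : ℕ) : ℝ)^K / K.factorial :=
            Nat.choose_le_pow_div K _
        _ ≤ (nr/((D:ℝ)+3))^K * Real.exp 1 ^ K := by
            rw [div_le_iff₀ hfacpos]
            calc (((m+(D+5)).choose (D+3) : ℕ) : ℝ)^K = (nr/((D:ℝ)+3))^K * (K:ℝ)^K := by
                  rw [hFr, mul_pow]
              _ ≤ (nr/((D:ℝ)+3))^K * ((K.factorial : ℝ) * Real.exp K) :=
                  mul_le_mul_of_nonneg_left (aux_pow_le_factorial_exp K) (by positivity)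
              _ = (nr/((D:ℝ)+3))^K * Real.exp 1 ^ K * K.factorial := by
                  rw [Real.exp_one_pow]; ring
    -- scalar inequality from the limit
    have hsc : b^(m+3) * nr^(2*(D+2)) ≤ (1/2 : ℝ)^(D+2) := by
      have hbd : (0:ℝ) < b^(D+2) := pow_pos hb0 _
      have hsplit : b^(m+(D+5)) = b^(m+3) * b^(D+2) := by
        rw [← pow_add]; congr 1; omega
      rw [hsplit] at hE
      apply le_of_mul_le_mul_right _ hbd
      calc b^(m+3) * nr^(2*(D+2)) * b^(D+2)
          = (((m + (D+5) : ℕ)) : ℝ)^(2*(D+2)) * (b^(m+3) * b^(D+2)) := by rw [hnrdef]; ring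
        _ ≤ (1/2 : ℝ)^(D+2) * b^(D+2) := hE.le
    -- key inequality
    have hkey : b^K * (nr^2)^J ≤ (1/2 : ℝ)^J := by
      have h1 : (m+3) * J = K * (D+2) := by rw [Nat.mul_comm]; exact hKd.symm
      have h4 : (b ^ K * (nr ^ 2) ^ J) ^ (D + 2) ≤ ((1/2 : ℝ) ^ J) ^ (D + 2) := by
        calc (b ^ K * (nr ^ 2) ^ J) ^ (D + 2)
            = (b ^ (m + 3) * nr ^ (2 * (D + 2))) ^ J := by
              simp only [mul_pow, ← pow_mul]
              rw [show K * (D + 2) = (m + 3) * J from h1.symm]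
              ring
          _ ≤ ((1/2 : ℝ) ^ (D+2)) ^ J := pow_le_pow_left₀ (by positivity) hsc J
          _ = ((1/2 : ℝ) ^ J) ^ (D + 2) := pow_right_comm _ _ _
      exact (pow_le_pow_iff_left₀ (by positivity) (by positivity) (by omega)).mp h4
    have hc2n : c^2 ≤ nr := by
      calc c^2 ≤ ((D:ℝ)+3)/Real.exp 1 := hc2.le
        _ ≤ (D:ℝ)+3 := div_le_self (by positivity) he1'
        _ ≤ nr := hnrD
    have hcc : (c ^ M)^2 = (c^2)^J * (c^2)^K := by
      rw [pow_right_comm, pasc1, pow_add]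
    have hnpow : nr ^ K = nr ^ L * nr ^ I := by
      rw [pasc2, pow_add]; ring
    -- assemble
    refine le_trans (Finset.sum_le_card_nsmul _ _ ((c ^ M) ^ 2 / nr ^ L) ?_) ?_
    · intro A hA
      have hA' := (Finset.mem_filter.mp hA).2
      have h2 : (Nat.card (homologyZ (m+(D+5)) (D+2) A) : ℝ) ≤ c ^ M := hA'.2
      gcongr
    · rw [nsmul_eq_mul]
      have hXnn : (0:ℝ) ≤ (c ^ M) ^ 2 / nr ^ L := by positivity
      calc ((Finset.univ.filter (fun A : Finset (Face (m+(D+5)) (D+2+1)) =>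
            IsHypertree (m+(D+5)) (D+2) A ∧
              (Nat.card (homologyZ (m+(D+5)) (D+2) A) : ℝ) ≤ c ^ M)).card : ℝ)
            * ((c ^ M) ^ 2 / nr ^ L)
          ≤ ((((m+(D+5)).choose (D+3)).choose K : ℕ) : ℝ) * ((c ^ M) ^ 2 / nr ^ L) :=
            mul_le_mul_of_nonneg_right (by exact_mod_cast hcard) hXnn
        _ ≤ ((nr/((D:ℝ)+3))^K * Real.exp 1 ^ K) * ((c ^ M) ^ 2 / nr ^ L) :=
            mul_le_mul_of_nonneg_right hchoose hXnn
        _ = b ^ K * nr ^ I * (c^2)^J := by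
            rw [hcc, hbdef, div_pow, div_pow, mul_pow]
            have hnrL : (0:ℝ) < nr ^ L := pow_pos hnr0 _
            field_simp
            rw [hnpow]
        _ ≤ b ^ K * (nr^2) ^ J := by
            have hIJ' : nr ^ I ≤ nr ^ J := pow_le_pow_right₀ hnr1 hIJ
            have hcJ : (c^2)^J ≤ nr ^ J := pow_le_pow_left₀ (by positivity) hc2n J
            calc b^K * nr^I * (c^2)^J ≤ (b^K * nr^J) * nr^J :=
                  mul_le_mul (mul_le_mul_of_nonneg_left hIJ' (by positivity)) hcJ
                    (by positivity) (by positivity)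
              _ = b^K * (nr^2)^J := by
                  rw [mul_assoc, ← pow_add, ← pow_mul, show J + J = 2*J from by omega]
        _ ≤ (1/2 : ℝ)^J := hkey
        _ ≤ (1/2 : ℝ)^(m+3) := pow_le_pow_of_le_one (by norm_num) (by norm_num) hJge
end
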